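/- arXiv:2103.10990 — 3 statements merged into one kernel-verified Lean document; each statement's English description precedes it below -/
import Mathlib

section
/- Let V be a finite set, k a positive integer, and α a real number with 0 < α ≤ 1/2. Let S be a subset of V with (1-α)·k ≤ |S| ≤ k. If a coloring c : V → Bool is chosen uniformly at random, then the probability that there exists a color b ∈ Bool such that at least (1-α)·k elements of S receive color b is at most 2^{1-(1-H(α))k}. -/
/-- The binary entropy function with base-2 logarithms. -/
noncomputable def H2 (x : ℝ) : ℝ := -x * Real.logb 2 x - (1 - x) * Real.logb 2 (1 - x)



open Finset in
lemma choose_grow (s j : ℕ) : ∀ k, s ≤ k → k ≤ 2 * j →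
    2 ^ (k - s) * Nat.choose s j ≤ Nat.choose k j := by
  intro k hk
  induction k, hk using Nat.le_induction with
  | base => intro _; simp
  | succ n hn ih =>
    intro h2
    have ihn := ih (by omega)
    have key : 2 * Nat.choose n j ≤ Nat.choose (n + 1) j := by
      obtain ⟨m, rfl⟩ : ∃ m, j = m + 1 := ⟨j - 1, by omega⟩
      have hle : Nat.choose n (m + 1) ≤ Nat.choose n m := by
        have hid := Nat.choose_succ_right_eq n m
        have h1 : n - m ≤ m + 1 := by omega
        have := Nat.mul_le_mul_left (Nat.choose n m) h1
        refine Nat.le_of_mul_le_mul_right ?_ (Nat.succ_pos m)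
        calc Nat.choose n (m + 1) * (m + 1) = Nat.choose n m * (n - m) := hid
          _ ≤ Nat.choose n m * (m + 1) := Nat.mul_le_mul_left _ h1
      calc 2 * Nat.choose n (m + 1) = Nat.choose n (m + 1) + Nat.choose n (m + 1) := by ring
        _ ≤ Nat.choose n m + Nat.choose n (m + 1) := by omega
        _ = Nat.choose (n + 1) (m + 1) := (Nat.choose_succ_succ n m).symm
    have hstep : n + 1 - s = (n - s) + 1 := by omega
    calc 2 ^ (n + 1 - s) * Nat.choose s j = 2 * (2 ^ (n - s) * Nat.choose s j) := by
          rw [hstep]; ring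
      _ ≤ 2 * Nat.choose n j := by omega
      _ ≤ Nat.choose (n + 1) j := key



lemma term_ge (k : ℕ) (α : ℝ) (hα0 : 0 < α) (hα1 : α ≤ 1 / 2) (j : ℕ)
    (hj : (1 - α) * k ≤ (j : ℝ)) (hjk : j ≤ k) :
    (2 : ℝ) ^ (-(H2 α * k)) ≤ (1 - α) ^ j * α ^ (k - j) := by
  have hβ0 : (0 : ℝ) < 1 - α := by linarith
  have hαβ : α ≤ 1 - α := by linarith
  have h2 : (2 : ℝ) ^ (-(H2 α * k)) = α ^ (α * k) * (1 - α) ^ ((1 - α) * k) := by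
    rw [H2]
    have e1 : -((-α * Real.logb 2 α - (1 - α) * Real.logb 2 (1 - α)) * k)
        = Real.logb 2 α * (α * k) + Real.logb 2 (1 - α) * ((1 - α) * k) := by ring
    have hx : ∀ (x c : ℝ), 0 < x → (2 : ℝ) ^ (Real.logb 2 x * c) = x ^ c := by
      intro x c hxx
      rw [Real.rpow_mul (by norm_num), Real.rpow_logb two_pos (by norm_num) hxx]
    rw [e1, Real.rpow_add two_pos, hx _ _ hα0, hx _ _ hβ0]
  have key : ∀ e : ℝ, α ^ ((k : ℝ) - e) * (1 - α) ^ e = α ^ (k : ℝ) * ((1 - α) / α) ^ e := by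
    intro e
    rw [Real.div_rpow hβ0.le hα0.le, Real.rpow_sub hα0]
    ring
  have hq1 : (1 : ℝ) ≤ (1 - α) / α := (one_le_div hα0).mpr hαβ
  have hmain : α ^ (α * k) * (1 - α) ^ ((1 - α) * k)
      ≤ α ^ ((k : ℝ) - (j : ℝ)) * (1 - α) ^ ((j : ℝ)) := by
    have e2 : α * (k : ℝ) = (k : ℝ) - (1 - α) * k := by ring
    rw [e2, key, key]
    exact mul_le_mul_of_nonneg_left
      (Real.rpow_le_rpow_of_exponent_le hq1 hj)
      (Real.rpow_nonneg hα0.le _)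
  rw [h2]
  refine hmain.trans (le_of_eq ?_)
  rw [mul_comm]
  congr 1
  · exact Real.rpow_natCast _ j
  · rw [show (k : ℝ) - (j : ℝ) = ((k - j : ℕ) : ℝ) by push_cast [Nat.cast_sub hjk]; ring]
    exact Real.rpow_natCast _ _

open Finset in
lemma tail_bound (k : ℕ) (α : ℝ) (hα0 : 0 < α) (hα1 : α ≤ 1 / 2) :
    (∑ j ∈ Finset.Icc ⌈(1 - α) * (k : ℝ)⌉₊ k, (Nat.choose k j : ℝ))
      ≤ (2 : ℝ) ^ (H2 α * k) := by
  set t := ⌈(1 - α) * (k : ℝ)⌉₊ with ht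
  have hβ0 : (0 : ℝ) < 1 - α := by linarith
  have hc : (0 : ℝ) < 2 ^ (-(H2 α * k)) := Real.rpow_pos_of_pos two_pos _
  have hsum : (∑ j ∈ Finset.Icc t k, (Nat.choose k j : ℝ)) * 2 ^ (-(H2 α * k)) ≤ 1 := by
    rw [Finset.sum_mul]
    calc ∑ j ∈ Finset.Icc t k, (Nat.choose k j : ℝ) * 2 ^ (-(H2 α * k))
        ≤ ∑ j ∈ Finset.Icc t k, (1 - α) ^ j * α ^ (k - j) * (Nat.choose k j : ℝ) := by
          apply Finset.sum_le_sum
          intro j hj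
          rw [Finset.mem_Icc] at hj
          rw [mul_comm]
          exact mul_le_mul_of_nonneg_right
            (term_ge k α hα0 hα1 j (le_trans (Nat.le_ceil _) (by exact_mod_cast hj.1)) hj.2)
            (Nat.cast_nonneg _)
      _ ≤ ∑ j ∈ Finset.range (k + 1), (1 - α) ^ j * α ^ (k - j) * (Nat.choose k j : ℝ) := by
          apply Finset.sum_le_sum_of_subset_of_nonneg
          · intro j hj
            rw [Finset.mem_Icc] at hj
            rw [Finset.mem_range]
            omega
          · intro j _ _
            positivity
      _ = ((1 - α) + α) ^ k := (add_pow _ _ _).symm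
      _ = 1 := by norm_num
  have hfin := (le_div_iff₀ hc).mpr hsum
  rwa [one_div, ← Real.rpow_neg (by norm_num), neg_neg] at hfin


open Finset in
lemma count_one_color (V : Type*) [Fintype V] [DecidableEq V] (S : Finset V) (t : ℕ)
    (b : Bool) :
    (Finset.univ.filter fun c : V → Bool =>
        t ≤ (S.filter fun x => c x = b).card).card
      ≤ 2 ^ (Fintype.card V - S.card) * ∑ j ∈ Finset.Icc t S.card, S.card.choose j := by
  classical
  set A := Finset.univ.filter fun c : V → Bool =>
      t ≤ (S.filter fun x => c x = b).card with hA
  set Φ : (V → Bool) → Finset V := fun c => S.filter fun x => c x = b with hΦ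
  have hcompl : Fintype.card {x : V // x ∉ S} = Fintype.card V - S.card := by
    rw [Fintype.card_subtype]
    rw [show (Finset.univ.filter fun x : V => x ∉ S) = Sᶜ by ext x; simp]
    exact Finset.card_compl S
  have h1 : A.card ≤ 2 ^ (Fintype.card V - S.card) * (A.image Φ).card := by
    apply Finset.card_le_mul_card_image
    intro T _
    have hinj : Set.InjOn (fun c : V → Bool => fun x : {x : V // x ∉ S} => c x.1)
        ↑(A.filter fun c => Φ c = T) := by
      intro c hc c' hc' hcc
      simp only [Finset.coe_filter, Set.mem_setOf_eq] at hc hc'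
      funext x
      by_cases hx : x ∈ S
      · have h1 : x ∈ T ↔ c x = b := by
          rw [← hc.2]; simp [Φ, hx]
        have h2 : x ∈ T ↔ c' x = b := by
          rw [← hc'.2]; simp [Φ, hx]
        by_cases hT : x ∈ T
        · rw [h1.mp hT, h2.mp hT]
        · have e1 : ¬ c x = b := fun h => hT (h1.mpr h)
          have e2 : ¬ c' x = b := fun h => hT (h2.mpr h)
          revert e1 e2; cases b <;> cases hcx : c x <;> cases hcx' : c' x <;> simp
      · exact congrFun hcc ⟨x, hx⟩
    calc (A.filter fun c => Φ c = T).card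
        ≤ (Finset.univ : Finset ({x : V // x ∉ S} → Bool)).card :=
          Finset.card_le_card_of_injOn _ (fun _ _ => Finset.mem_univ _) hinj
      _ = 2 ^ (Fintype.card V - S.card) := by
          rw [Finset.card_univ, Fintype.card_fun, Fintype.card_bool, hcompl]
  have h2 : (A.image Φ).card ≤ ∑ j ∈ Finset.Icc t S.card, S.card.choose j := by
    have hmaps : ∀ T ∈ A.image Φ, T.card ∈ Finset.Icc t S.card := by
      intro T hT
      rw [Finset.mem_image] at hT
      obtain ⟨c, hc, rfl⟩ := hT
      rw [hA, Finset.mem_filter] at hc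
      rw [Finset.mem_Icc]
      exact ⟨hc.2, Finset.card_filter_le _ _⟩
    rw [Finset.card_eq_sum_card_fiberwise hmaps]
    apply Finset.sum_le_sum
    intro j hj
    calc ((A.image Φ).filter fun T => T.card = j).card
        ≤ (S.powersetCard j).card := by
          apply Finset.card_le_card
          intro T hT
          rw [Finset.mem_filter, Finset.mem_image] at hT
          obtain ⟨⟨c, _, rfl⟩, hcard⟩ := hT
          rw [Finset.mem_powersetCard]
          exact ⟨Finset.filter_subset _ _, hcard⟩
      _ = S.card.choose j := Finset.card_powersetCard _ _
  calc A.card ≤ 2 ^ (Fintype.card V - S.card) * (A.image Φ).card := h1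
    _ ≤ 2 ^ (Fintype.card V - S.card) * ∑ j ∈ Finset.Icc t S.card, S.card.choose j :=
        Nat.mul_le_mul_left _ h2

open Classical in
/-- For a uniformly random coloring `c : V → Bool`, the probability
that a set `S` with `(1-α)k ≤ |S| ≤ k` has at least `(1-α)k` elements of one
color is at most `2 ^ (1 - (1 - H(α))k)`. -/
theorem almost_monochromatic_prob_le (V : Type*) [Fintype V] [DecidableEq V]
    (k : ℕ) (hk : 0 < k) (α : ℝ) (hα0 : 0 < α) (hα1 : α ≤ 1 / 2)
    (S : Finset V)
    (hlow : (1 - α) * k ≤ (S.card : ℝ)) (hhigh : S.card ≤ k) :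
    ((Finset.univ.filter fun c : V → Bool =>
        ∃ b : Bool, (1 - α) * k ≤ ((S.filter fun x => c x = b).card : ℝ)).card : ℝ)
        / 2 ^ Fintype.card V
      ≤ (2 : ℝ) ^ ((1 : ℝ) - (1 - H2 α) * k) := by
  classical
  set t := ⌈(1 - α) * (k : ℝ)⌉₊ with ht
  set N := (Finset.univ.filter fun c : V → Bool =>
      ∃ b : Bool, (1 - α) * k ≤ ((S.filter fun x => c x = b).card : ℝ)).card with hNdef
  set Ms := ∑ j ∈ Finset.Icc t S.card, S.card.choose j with hMs
  set Mk := ∑ j ∈ Finset.Icc t k, k.choose j with hMk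
  have hsv : S.card ≤ Fintype.card V := by
    rw [← Finset.card_univ]
    exact Finset.card_le_univ S
  have hsk : S.card ≤ k := hhigh
  -- union bound
  have hsub : (Finset.univ.filter fun c : V → Bool =>
      ∃ b : Bool, (1 - α) * k ≤ ((S.filter fun x => c x = b).card : ℝ))
      ⊆ (Finset.univ.filter fun c : V → Bool => t ≤ (S.filter fun x => c x = true).card)
        ∪ (Finset.univ.filter fun c : V → Bool => t ≤ (S.filter fun x => c x = false).card) := by
    intro c hc
    rw [Finset.mem_filter] at hc
    obtain ⟨-, b, hbb⟩ := hc
    have hle : t ≤ (S.filter fun x => c x = b).card := Nat.ceil_le.mpr hbb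
    rw [Finset.mem_union, Finset.mem_filter, Finset.mem_filter]
    cases b
    · exact Or.inr ⟨Finset.mem_univ _, hle⟩
    · exact Or.inl ⟨Finset.mem_univ _, hle⟩
  have hN : N ≤ 2 * (2 ^ (Fintype.card V - S.card) * Ms) := by
    calc N ≤ ((Finset.univ.filter fun c : V → Bool =>
            t ≤ (S.filter fun x => c x = true).card)
          ∪ (Finset.univ.filter fun c : V → Bool =>
            t ≤ (S.filter fun x => c x = false).card)).card := Finset.card_le_card hsub
      _ ≤ (Finset.univ.filter fun c : V → Bool =>
            t ≤ (S.filter fun x => c x = true).card).card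
          + (Finset.univ.filter fun c : V → Bool =>
            t ≤ (S.filter fun x => c x = false).card).card := Finset.card_union_le _ _
      _ ≤ 2 ^ (Fintype.card V - S.card) * Ms + 2 ^ (Fintype.card V - S.card) * Ms :=
          Nat.add_le_add (count_one_color V S t true) (count_one_color V S t false)
      _ = 2 * (2 ^ (Fintype.card V - S.card) * Ms) := by ring
  -- k ≤ 2t
  have hk2t : k ≤ 2 * t := by
    have h1 : (k : ℝ) ≤ 2 * ((1 - α) * k) := by nlinarith [Nat.cast_nonneg (α := ℝ) k]
    have h2 : ((1 - α) * (k : ℝ)) ≤ t := Nat.le_ceil _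
    have h3 : (k : ℝ) ≤ 2 * (t : ℝ) := by linarith
    exact_mod_cast h3
  have hMsk : 2 ^ (k - S.card) * Ms ≤ Mk := by
    calc 2 ^ (k - S.card) * Ms = ∑ j ∈ Finset.Icc t S.card, 2 ^ (k - S.card) * S.card.choose j :=
          Finset.mul_sum _ _ _
      _ ≤ ∑ j ∈ Finset.Icc t S.card, k.choose j := by
          apply Finset.sum_le_sum
          intro j hj
          rw [Finset.mem_Icc] at hj
          refine choose_grow S.card j k hsk (le_trans hk2t ?_)
          exact Nat.mul_le_mul_left 2 hj.1
      _ ≤ Mk := Finset.sum_le_sum_of_subset (Finset.Icc_subset_Icc_right hsk)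
  have hnat : N * 2 ^ k ≤ 2 * Mk * 2 ^ Fintype.card V := by
    have hvs : (Fintype.card V - S.card) + k = Fintype.card V + (k - S.card) := by
      rw [← Nat.sub_add_comm hsv]
      exact Nat.add_sub_assoc hsk _
    calc N * 2 ^ k ≤ 2 * (2 ^ (Fintype.card V - S.card) * Ms) * 2 ^ k := mul_le_mul_left hN _
      _ = 2 * 2 ^ ((Fintype.card V - S.card) + k) * Ms := by rw [pow_add]; ring
      _ = 2 * 2 ^ Fintype.card V * (2 ^ (k - S.card) * Ms) := by rw [hvs, pow_add]; ring
      _ ≤ 2 * 2 ^ Fintype.card V * Mk := mul_le_mul_right hMsk _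
      _ = 2 * Mk * 2 ^ Fintype.card V := by ring
  have hMkR : (Mk : ℝ) ≤ 2 ^ (H2 α * k) := by
    rw [hMk]
    push_cast
    exact tail_bound k α hα0 hα1
  have hreal : (N : ℝ) / 2 ^ Fintype.card V ≤ 2 * (Mk : ℝ) / 2 ^ k := by
    rw [div_le_div_iff₀ (by positivity) (by positivity)]
    exact_mod_cast hnat
  have hRHS : (2 : ℝ) ^ ((1 : ℝ) - (1 - H2 α) * k) = 2 * (2 : ℝ) ^ (H2 α * k) / 2 ^ k := by
    rw [show (1 : ℝ) - (1 - H2 α) * k = 1 + H2 α * k + (-(k : ℝ)) by ring]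
    rw [Real.rpow_add two_pos, Real.rpow_add two_pos, Real.rpow_one,
        Real.rpow_neg (by norm_num), Real.rpow_natCast]
    ring
  calc (N : ℝ) / 2 ^ Fintype.card V ≤ 2 * (Mk : ℝ) / 2 ^ k := hreal
    _ ≤ 2 * (2 : ℝ) ^ (H2 α * k) / 2 ^ k := by gcongr
    _ = (2 : ℝ) ^ ((1 : ℝ) - (1 - H2 α) * k) := hRHS.symm
end

section
/- For all natural numbers g, s, t with g ≤ s ≤ t, one has 2^{-s} · ∑_{i=0}^{s-g} C(s,i) ≤ 2^{-t} · ∑_{i=0}^{t-g} C(t,i), where C(n,i) denotes the binomial coefficient. In other words, the function s ↦ 2^{-s} ∑_{i=0}^{s-g} C(s,i) is nondecreasing for s ≥ g. -/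
/-! Summing Pascal's rule over `i ≤ m + 1` gives
`∑_{i ≤ m+1} C(n+1, i) = ∑_{i ≤ m} C(n, i) + ∑_{i ≤ m+1} C(n, i) ≥ 2 ∑_{i ≤ m} C(n, i)`,
so raising `s` by one at least doubles the numerator while the denominator exactly doubles. -/

open Finset

theorem sum_range_succ_choose_succ (n m : ℕ) :
    ∑ i ∈ range (m + 2), (n + 1).choose i
      = ∑ i ∈ range (m + 1), n.choose i + ∑ i ∈ range (m + 2), n.choose i := by
  rw [sum_range_succ', sum_range_succ' (fun i => n.choose i) (m + 1)]
  simp only [Nat.choose_succ_succ, sum_add_distrib, Nat.choose_zero_right]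
  ring

theorem two_mul_sum_range_choose_le (n m : ℕ) :
    2 * ∑ i ∈ range (m + 1), n.choose i ≤ ∑ i ∈ range (m + 2), (n + 1).choose i := by
  rw [sum_range_succ_choose_succ, two_mul]
  exact Nat.add_le_add_left (sum_le_sum_of_subset (range_subset_range.2 (by omega))) _

theorem sum_range_choose_div_two_pow_le_succ (n m : ℕ) :
    (∑ i ∈ range (m + 1), (n.choose i : ℝ)) / 2 ^ n
      ≤ (∑ i ∈ range (m + 2), ((n + 1).choose i : ℝ)) / 2 ^ (n + 1) := by
  have h : 2 * ∑ i ∈ range (m + 1), (n.choose i : ℝ)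
      ≤ ∑ i ∈ range (m + 2), ((n + 1).choose i : ℝ) := by
    exact_mod_cast two_mul_sum_range_choose_le n m
  rw [pow_succ, ← div_div, le_div_iff₀ two_pos, div_mul_eq_mul_div, mul_comm]
  gcongr

/-- For `g ≤ s ≤ t`, the quantity `2⁻ˢ ∑_{i=0}^{s-g} C(s,i)` is
nondecreasing in `s`. -/
theorem binomial_tail_ratio_mono (g s t : ℕ) (hgs : g ≤ s) (hst : s ≤ t) :
    (∑ i ∈ Finset.range (s - g + 1), (s.choose i : ℝ)) / 2 ^ s
      ≤ (∑ i ∈ Finset.range (t - g + 1), (t.choose i : ℝ)) / 2 ^ t := by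
  induction t, hst using Nat.le_induction with
  | base => exact le_rfl
  | succ t hst ih =>
    have hsub : t + 1 - g + 1 = t - g + 2 := by omega
    rw [hsub]
    exact ih.trans (sum_range_choose_div_two_pow_le_succ t (t - g))
end

section
/- Let V be a finite set, s a positive integer, Δ a natural number, and let E be a finite family of subsets of V such that every f ∈ E satisfies |f| ≥ s, and every f ∈ E intersects at most Δ other members of E. If e·2^{1-s}·(Δ+1) < 1, then there exists a coloring c : V → Bool such that no f ∈ E is monochromatic (i.e., every edge contains elements of both colors). -/
/-!
Counting form of the symmetric Lovász Local Lemma. For a set `S` of edges, count the colorings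
under which no edge of `S` is monochromatic, and put `x = 1/(Δ+2)`. By strong induction on `S`,
at most an `x`-fraction of them make a given edge `f` monochromatic: the edges of `S` disjoint
from `f` do not see the colors on `f`, so among the colorings avoiding them exactly a
`2^(1-|f|) ≤ x(1-x)^Δ` fraction make `f` monochromatic, and adding back the at most `Δ`
neighbours of `f` one at a time costs a factor of at most `1 - x` each, by the induction
hypothesis. Adding all edges one at a time then leaves at least `(1-x)^|E| 2^|V| > 0`
colorings. Finally `x(1-x)^Δ ≥ 1/(e(Δ+1))` because `(1 + 1/(Δ+1))^(Δ+1) ≤ e`.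
-/

open Finset

section Coloring

variable {V : Type*}

def IsMonochromatic (c : V → Bool) (f : Finset V) : Prop :=
  ∃ b, ∀ x ∈ f, c x = b

instance (c : V → Bool) (f : Finset V) : Decidable (IsMonochromatic c f) :=
  inferInstanceAs (Decidable (∃ _, _))

theorem not_isMonochromatic_iff {c : V → Bool} {f : Finset V} :
    ¬ IsMonochromatic c f ↔ (∃ x ∈ f, c x = true) ∧ ∃ x ∈ f, c x = false := by
  simp [IsMonochromatic, and_comm]

theorem isMonochromatic_congr {c c' : V → Bool} {f : Finset V} (h : ∀ x ∈ f, c x = c' x) :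
    IsMonochromatic c f ↔ IsMonochromatic c' f :=
  exists_congr fun _ => forall₂_congr fun x hx => by rw [h x hx]

theorem isMonochromatic_restrict_univ_iff {c : V → Bool} {f : Finset V} :
    IsMonochromatic (fun x : f => c x) univ ↔ IsMonochromatic c f := by
  simp [IsMonochromatic]

theorem card_filter_isMonochromatic_univ (ι : Type*) [Fintype ι] [DecidableEq ι] [Nonempty ι] :
    #{a : ι → Bool | IsMonochromatic a univ} = 2 := by
  have : ({a : ι → Bool | IsMonochromatic a univ} : Finset _) =
      univ.map ⟨Function.const ι, Function.const_injective⟩ := by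
    ext a
    simp only [IsMonochromatic, mem_filter, mem_univ, true_and, forall_const, mem_map,
      Function.Embedding.coeFn_mk]
    exact exists_congr fun b => by rw [funext_iff]; exact forall_congr' fun _ => eq_comm
  rw [this, card_map, card_univ, Fintype.card_bool]

end Coloring

theorem nonempty_of_two_div_two_pow_card_le_one {V : Type*} {f : Finset V}
    (h : (2 : ℝ) / 2 ^ #f ≤ 1) : f.Nonempty := by
  rw [nonempty_iff_ne_empty]
  rintro rfl
  norm_num at h

section Counting

variable {V : Type*} [Fintype V] [DecidableEq V]

theorem card_filter_restrict_and_mul_two_pow (f : Finset V) (R : (f → Bool) → Prop)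
    [DecidablePred R] (P : (V → Bool) → Prop) [DecidablePred P]
    (hP : ∀ c c' : V → Bool, (∀ x ∉ f, c x = c' x) → (P c ↔ P c')) :
    #{c | R (fun x => c x) ∧ P c} * 2 ^ #f = #{a | R a} * #{c | P c} := by
  let e := Equiv.piEquivPiSubtypeProd (· ∈ f) fun _ : V => Bool
  let Q : ({x // x ∉ f} → Bool) → Prop := fun b => P (e.symm (fun _ => true, b))
  have hPQ : ∀ c, P c ↔ Q (e c).2 := fun c =>
    hP _ _ fun x hx => by simp [e, hx]
  have hcardRP : #{c | R (fun x => c x) ∧ P c} = #{a | R a} * #{b | Q b} := by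
    rw [← card_product, ← filter_product, univ_product_univ]
    exact card_equiv e fun c => by simp [e, hPQ c]
  have hcardP : #{c | P c} = 2 ^ #f * #{b | Q b} := by
    rw [← Fintype.card_coe f, ← Fintype.card_bool, ← Fintype.card_fun, ← card_univ,
      ← card_product, ← filter_true_of_mem (s := univ) (p := fun _ : f → Bool => True) (by simp),
      ← filter_product, univ_product_univ]
    exact card_equiv e fun c => by simp [hPQ c]
  rw [hcardRP, hcardP]
  ring

def properColorings (S : Finset (Finset V)) : Finset (V → Bool) :=
  {c | ∀ g ∈ S, ¬ IsMonochromatic c g}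

theorem properColorings_empty : properColorings (∅ : Finset (Finset V)) = univ := by
  simp [properColorings]

theorem properColorings_anti {S T : Finset (Finset V)} (h : S ⊆ T) :
    properColorings T ⊆ properColorings S := fun c => by
  simp only [properColorings, mem_filter, mem_univ, true_and]
  exact fun hc g hg => hc g (h hg)

theorem card_filter_isMonochromatic_add_card_properColorings_insert (f : Finset V)
    (S : Finset (Finset V)) :
    #{c ∈ properColorings S | IsMonochromatic c f} + #(properColorings (insert f S)) =
      #(properColorings S) := by
  have : properColorings (insert f S) = {c ∈ properColorings S | ¬ IsMonochromatic c f} := by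
    ext c
    simp [properColorings, and_comm]
  rw [this, card_filter_add_card_filter_not]

theorem card_filter_isMonochromatic_properColorings_mul_two_pow {f : Finset V} (hf : f.Nonempty)
    {S : Finset (Finset V)} (hS : ∀ g ∈ S, Disjoint g f) :
    #{c ∈ properColorings S | IsMonochromatic c f} * 2 ^ #f = 2 * #(properColorings S) := by
  have : Nonempty f := hf.to_subtype
  have key := card_filter_restrict_and_mul_two_pow f (IsMonochromatic · univ)
    (· ∈ properColorings S) fun c c' h => by
      simp only [properColorings, mem_filter, mem_univ, true_and]
      exact forall₂_congr fun g hg => not_congr <| isMonochromatic_congr fun x hx =>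
        h x (disjoint_left.mp (hS g hg) hx)
  rw [card_filter_isMonochromatic_univ, filter_mem_eq_inter, univ_inter] at key
  rw [← key]
  congr 2
  ext c
  simp only [mem_filter, mem_univ, true_and, isMonochromatic_restrict_univ_iff, and_comm]

theorem one_sub_mul_le_card_properColorings_insert {x : ℝ} {f : Finset V} {S : Finset (Finset V)}
    (h : #{c ∈ properColorings S | IsMonochromatic c f} ≤ x * #(properColorings S)) :
    (1 - x) * #(properColorings S) ≤ #(properColorings (insert f S)) := by
  have := card_filter_isMonochromatic_add_card_properColorings_insert f S
  rify at this
  linarith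

theorem one_sub_pow_mul_card_properColorings_le {x : ℝ} (hx : x ≤ 1) (S T : Finset (Finset V))
    (h : ∀ g ∈ T, ∀ T' ⊆ T, g ∉ T' → #{c ∈ properColorings (S ∪ T') | IsMonochromatic c g} ≤
      x * #(properColorings (S ∪ T'))) :
    (1 - x) ^ #T * #(properColorings S) ≤ #(properColorings (S ∪ T)) := by
  induction T using Finset.induction_on with
  | empty => simp
  | insert g T hg ih =>
    have ih := ih fun g' hg' T' hT' =>
      h g' (mem_insert_of_mem hg') T' (hT'.trans (subset_insert g T))
    have hstep := one_sub_mul_le_card_properColorings_insert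
      (h g (mem_insert_self g T) T (subset_insert g T) hg)
    rw [card_insert_of_notMem hg, union_insert, pow_succ', mul_assoc]
    exact (mul_le_mul_of_nonneg_left ih (by linarith)).trans hstep

variable {E : Finset (Finset V)} {Δ : ℕ} {x : ℝ}

theorem card_filter_isMonochromatic_properColorings_le (hx₀ : 0 ≤ x) (hx₁ : x ≤ 1)
    (hdeg : ∀ f ∈ E, #{g ∈ E | g ≠ f ∧ (g ∩ f).Nonempty} ≤ Δ)
    (hprob : ∀ f ∈ E, (2 : ℝ) / 2 ^ #f ≤ x * (1 - x) ^ Δ) (S : Finset (Finset V)) (hSE : S ⊆ E)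
    {f : Finset V} (hf : f ∈ E) :
    #{c ∈ properColorings S | IsMonochromatic c f} ≤ x * #(properColorings S) := by
  induction S using Finset.strongInduction generalizing f with
  | H S ih =>
  by_cases hfS : f ∈ S
  · have : {c ∈ properColorings S | IsMonochromatic c f} = ∅ := by
      simp only [properColorings, filter_filter, filter_eq_empty_iff]
      exact fun c _ hc => hc.1 f hfS hc.2
    rw [this, card_empty, Nat.cast_zero]
    positivity
  set N := {g ∈ S | ¬ Disjoint g f}
  set D := {g ∈ S | Disjoint g f}
  have hN : #N ≤ Δ := (card_le_card fun g hg => by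
    simp only [N, mem_filter, not_disjoint_iff_nonempty_inter] at hg ⊢
    exact ⟨hSE hg.1, fun h => hfS (h ▸ hg.1), hg.2⟩).trans (hdeg f hf)
  have hfne : f.Nonempty := nonempty_of_two_div_two_pow_card_le_one <| (hprob f hf).trans <|
    mul_le_one₀ hx₁ (pow_nonneg (by linarith) _) (pow_le_one₀ (by linarith) (by linarith))
  have hpeel := one_sub_pow_mul_card_properColorings_le hx₁ D N fun g hg T hT hgT => by
    have hgS := (mem_filter.mp hg).1
    have hsub : D ∪ T ⊆ S := union_subset (filter_subset _ _) (hT.trans (filter_subset _ _))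
    have hgDT : g ∉ D ∪ T := by
      simp only [mem_union, not_or]
      exact ⟨fun hgD => (mem_filter.mp hg).2 (mem_filter.mp hgD).2, hgT⟩
    exact ih _ ((ssubset_iff_of_subset hsub).mpr ⟨g, hgS, hgDT⟩) (hsub.trans hSE) (hSE hgS)
  have hindep := card_filter_isMonochromatic_properColorings_mul_two_pow (S := D) hfne
    fun g hg => (mem_filter.mp hg).2
  rify at hindep
  calc (#{c ∈ properColorings S | IsMonochromatic c f} : ℝ)
      ≤ #{c ∈ properColorings D | IsMonochromatic c f} := by
        gcongr
        exact properColorings_anti (filter_subset _ _)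
    _ = 2 / 2 ^ #f * #(properColorings D) := by
        field_simp
        linarith
    _ ≤ x * (1 - x) ^ #N * #(properColorings D) := by
        gcongr
        exact (hprob f hf).trans <| mul_le_mul_of_nonneg_left
          (pow_le_pow_of_le_one (by linarith) (by linarith) hN) hx₀
    _ ≤ x * #(properColorings (D ∪ N)) := by
        rw [mul_assoc]
        exact mul_le_mul_of_nonneg_left hpeel hx₀
    _ = x * #(properColorings S) := by
        rw [filter_union_filter_not_eq]

theorem properColorings_nonempty (hx₀ : 0 ≤ x) (hx₁ : x < 1)
    (hdeg : ∀ f ∈ E, #{g ∈ E | g ≠ f ∧ (g ∩ f).Nonempty} ≤ Δ)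
    (hprob : ∀ f ∈ E, (2 : ℝ) / 2 ^ #f ≤ x * (1 - x) ^ Δ) :
    (properColorings E).Nonempty := by
  have := one_sub_pow_mul_card_properColorings_le hx₁.le ∅ E fun g hg T hT _ =>
    card_filter_isMonochromatic_properColorings_le hx₀ hx₁.le hdeg hprob _ (by simpa using hT) hg
  rw [empty_union, properColorings_empty, card_univ] at this
  rw [← card_pos, ← Nat.cast_pos (α := ℝ)]
  exact lt_of_lt_of_le
    (mul_pos (pow_pos (sub_pos.mpr hx₁) _) (Nat.cast_pos.mpr Fintype.card_pos)) this

end Counting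

theorem two_div_two_pow_le_two_rpow_one_sub {s n : ℕ} (h : s ≤ n) :
    (2 : ℝ) / 2 ^ n ≤ 2 ^ (1 - (s : ℝ)) := by
  rw [Real.rpow_sub two_pos, Real.rpow_one, Real.rpow_natCast]
  gcongr
  norm_num

theorem le_inv_mul_one_sub_inv_pow {p : ℝ} (d : ℕ) (h : Real.exp 1 * p * (d + 1) ≤ 1) :
    p ≤ (d + 2 : ℝ)⁻¹ * (1 - (d + 2 : ℝ)⁻¹) ^ d := by
  set q : ℝ := (1 + ((d + 1 : ℕ) : ℝ)⁻¹) ^ (d + 1)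
  have hq : q ≤ Real.exp 1 := Real.one_add_inv_pow_le_exp
  have hq₀ : 0 < q := by positivity
  have hx : (d + 2 : ℝ)⁻¹ * (1 - (d + 2 : ℝ)⁻¹) ^ d = 1 / ((d + 1) * q) := by
    have h₁ : 1 - (d + 2 : ℝ)⁻¹ = (d + 1) / (d + 2) := by field_simp; ring
    have h₂ : 1 + ((d + 1 : ℕ) : ℝ)⁻¹ = (d + 2) / (d + 1) := by push_cast; field_simp; ring
    simp only [q, h₁, h₂, div_pow]
    field_simp
    ring
  rw [hx, le_div_iff₀ (by positivity)]
  rcases le_or_gt 0 p with hp | hp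
  · calc p * ((d + 1) * q) ≤ Real.exp 1 * p * (d + 1) := by
          nlinarith [mul_nonneg (mul_nonneg hp d.cast_add_one_pos.le) (sub_nonneg.mpr hq)]
      _ ≤ 1 := h
  · nlinarith

theorem hypergraph_two_colorable_general (V : Type*) [Fintype V] [DecidableEq V]
    (s : ℕ) (Δ : ℕ) (E : Finset (Finset V))
    (hsize : ∀ f ∈ E, s ≤ f.card)
    (hdeg : ∀ f ∈ E, (E.filter fun g => g ≠ f ∧ (g ∩ f).Nonempty).card ≤ Δ)
    (hLLL : Real.exp 1 * (2 : ℝ) ^ (1 - (s : ℝ)) * ((Δ : ℝ) + 1) < 1) :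
    ∃ c : V → Bool, ∀ f ∈ E, (∃ x ∈ f, c x = true) ∧ (∃ x ∈ f, c x = false) := by
  have hprob (f) (hf : f ∈ E) : (2 : ℝ) / 2 ^ #f ≤ (Δ + 2 : ℝ)⁻¹ * (1 - (Δ + 2 : ℝ)⁻¹) ^ Δ :=
    (two_div_two_pow_le_two_rpow_one_sub (hsize f hf)).trans
      (le_inv_mul_one_sub_inv_pow Δ hLLL.le)
  obtain ⟨c, hc⟩ := properColorings_nonempty (by positivity)
    (inv_lt_one_of_one_lt₀ (by linarith)) hdeg hprob
  exact ⟨c, fun f hf => not_isMonochromatic_iff.mp ((mem_filter.mp hc).2 f hf)⟩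

/-- symmetric Lovász Local Lemma for hypergraph 2-coloring: if
every edge has at least `s` vertices, every edge intersects at most `Δ` other
edges, and `e·2^{1-s}·(Δ+1) < 1`, then there is a 2-coloring with no
monochromatic edge (every edge gets both colors). -/
theorem hypergraph_two_colorable (V : Type*) [Fintype V] [DecidableEq V]
    (s : ℕ) (hs : 0 < s) (Δ : ℕ) (E : Finset (Finset V))
    (hsize : ∀ f ∈ E, s ≤ f.card)
    (hdeg : ∀ f ∈ E, (E.filter fun g => g ≠ f ∧ (g ∩ f).Nonempty).card ≤ Δ)
    (hLLL : Real.exp 1 * (2 : ℝ) ^ (1 - (s : ℝ)) * ((Δ : ℝ) + 1) < 1) :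
    ∃ c : V → Bool, ∀ f ∈ E, (∃ x ∈ f, c x = true) ∧ (∃ x ∈ f, c x = false) :=
  hypergraph_two_colorable_general V s Δ E hsize hdeg hLLL
end
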